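/- arXiv:math/0608315 — 2 statements merged into one kernel-verified Lean document; each statement's English description precedes it below -/
import Mathlib

section
/- Let ν > 0 and A > 0. For analytic functions F, G on a star-shaped neighborhood Ω of [0,∞) with finite norm ‖F‖ := sup_{t∈Ω} (A+|t|)² |F(t)| e^{-ν|t|}, the convolution (F*G)(t) = ∫₀ᵗ F(q)G(t-q) dq satisfies ‖F*G‖ ≤ (C/A) ‖F‖ ‖G‖ for a universal constant C independent of A, ν, F, G. -/
/-! From the weighted bounds, `‖F q‖ ≤ M_F e^{νq} / (A+q)²` and likewise for `G`. In the integrand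
of the convolution the exponentials combine to `e^{νt}`, and since `(A+q) + (A+(t-q)) ≥ A+t` the
elementary inequality `(a+b)² / (a²b²) ≤ 2 (1/a² + 1/b²)` gives
`(A+t)² / ((A+q)² (A+(t-q))²) ≤ 2 (1/(A+q)² + 1/(A+(t-q))²)`.
The right-hand side integrates over `[0,t]` to at most `4/A`, so `C = 4` works. -/

open MeasureTheory Real Set

theorem sq_add_mul_inv_sq_mul_inv_sq_le (a b : ℝ) :
    (a + b) ^ 2 * ((a ^ 2)⁻¹ * (b ^ 2)⁻¹) ≤ 2 * ((a ^ 2)⁻¹ + (b ^ 2)⁻¹) := by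
  calc (a + b) ^ 2 * ((a ^ 2)⁻¹ * (b ^ 2)⁻¹)
      ≤ 2 * (a ^ 2 + b ^ 2) * ((a ^ 2)⁻¹ * (b ^ 2)⁻¹) := by
        gcongr
        nlinarith [sq_nonneg (a - b)]
    _ = 2 * (a ^ 2 * (a ^ 2)⁻¹ * (b ^ 2)⁻¹ + b ^ 2 * (b ^ 2)⁻¹ * (a ^ 2)⁻¹) := by ring
    _ ≤ 2 * (1 * (b ^ 2)⁻¹ + 1 * (a ^ 2)⁻¹) := by gcongr <;> exact mul_inv_le_one
    _ = 2 * ((a ^ 2)⁻¹ + (b ^ 2)⁻¹) := by ring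

theorem le_mul_exp_mul_inv_sq_of_sq_mul_mul_exp_neg_le {a ν q x M : ℝ} (ha : a ≠ 0)
    (h : a ^ 2 * x * exp (-ν * q) ≤ M) : x ≤ M * exp (ν * q) * (a ^ 2)⁻¹ := by
  calc x = a ^ 2 * x * exp (-ν * q) * exp (ν * q) * (a ^ 2)⁻¹ := by
        rw [mul_assoc (a ^ 2 * x), ← exp_add, neg_mul, neg_add_cancel, exp_zero]
        field_simp
    _ ≤ M * exp (ν * q) * (a ^ 2)⁻¹ := by gcongr

section WeightedConvolution

variable {A t : ℝ}

theorem intervalIntegrable_inv_sq_add (hA : 0 < A) (ht : 0 ≤ t) :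
    IntervalIntegrable (fun q => ((A + q) ^ 2)⁻¹) volume 0 t := by
  refine (ContinuousOn.inv₀ (by fun_prop) fun q hq => ?_).intervalIntegrable
  rw [uIcc_of_le ht] at hq
  exact (pow_pos (by linarith [hq.1]) 2).ne'

theorem intervalIntegrable_inv_sq_add_sub (hA : 0 < A) (ht : 0 ≤ t) :
    IntervalIntegrable (fun q => ((A + (t - q)) ^ 2)⁻¹) volume 0 t := by
  simpa using ((intervalIntegrable_inv_sq_add hA ht).comp_sub_left t).symm

theorem integral_inv_sq_add (hA : 0 < A) (ht : 0 ≤ t) :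
    ∫ q in (0:ℝ)..t, ((A + q) ^ 2)⁻¹ = A⁻¹ - (A + t)⁻¹ := by
  have hderiv : ∀ q ∈ uIcc 0 t, HasDerivAt (fun x => -(A + x)⁻¹) ((A + q) ^ 2)⁻¹ q := by
    intro q hq
    rw [uIcc_of_le ht] at hq
    exact (((hasDerivAt_id q).const_add A).inv (show 0 < A + q by linarith [hq.1]).ne').neg
      |>.congr_deriv (by rw [neg_div, neg_neg, one_div]; rfl)
  rw [intervalIntegral.integral_eq_sub_of_hasDerivAt hderiv (intervalIntegrable_inv_sq_add hA ht)]
  ring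

theorem integral_inv_sq_add_add_inv_sq_add_sub (hA : 0 < A) (ht : 0 ≤ t) :
    ∫ q in (0:ℝ)..t, (((A + q) ^ 2)⁻¹ + ((A + (t - q)) ^ 2)⁻¹) = 2 * (A⁻¹ - (A + t)⁻¹) := by
  have hreflect : ∫ q in (0:ℝ)..t, ((A + (t - q)) ^ 2)⁻¹ = ∫ q in (0:ℝ)..t, ((A + q) ^ 2)⁻¹ := by
    simpa only [sub_self, sub_zero] using
      intervalIntegral.integral_comp_sub_left (fun q => ((A + q) ^ 2)⁻¹) t (a := 0) (b := t)
  rw [intervalIntegral.integral_add (intervalIntegrable_inv_sq_add hA ht)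
    (intervalIntegrable_inv_sq_add_sub hA ht), hreflect, integral_inv_sq_add hA ht]
  ring

theorem inv_sq_add_mul_inv_sq_add_sub_le (hA : 0 < A) {q : ℝ} (hq : q ∈ Icc 0 t) :
    ((A + q) ^ 2)⁻¹ * ((A + (t - q)) ^ 2)⁻¹
      ≤ 2 / (A + t) ^ 2 * (((A + q) ^ 2)⁻¹ + ((A + (t - q)) ^ 2)⁻¹) := by
  have hAt : 0 < A + t := by linarith [hq.1, hq.2]
  rw [div_mul_eq_mul_div, le_div_iff₀ (by positivity), mul_comm]
  refine le_trans ?_ (sq_add_mul_inv_sq_mul_inv_sq_le _ _)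
  exact mul_le_mul_of_nonneg_right (pow_le_pow_left₀ hAt.le (by linarith [hq.1]) 2)
    (by positivity)

variable {E : Type*} [NormedRing E] {ν MF MG : ℝ} {F G : ℝ → E}

theorem norm_mul_apply_sub_le (hA : 0 < A)
    (hF : ∀ q ∈ Icc 0 t, (A + q) ^ 2 * ‖F q‖ * exp (-ν * q) ≤ MF)
    (hG : ∀ q ∈ Icc 0 t, (A + q) ^ 2 * ‖G q‖ * exp (-ν * q) ≤ MG) {q : ℝ} (hq : q ∈ Icc 0 t) :
    ‖F q * G (t - q)‖
      ≤ 2 * MF * MG * exp (ν * t) / (A + t) ^ 2 * (((A + q) ^ 2)⁻¹ + ((A + (t - q)) ^ 2)⁻¹) := by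
  have hq' : t - q ∈ Icc 0 t := ⟨by linarith [hq.2], by linarith [hq.1]⟩
  have hMF : 0 ≤ MF := le_trans (by positivity) (hF q hq)
  have hMG : 0 ≤ MG := le_trans (by positivity) (hG q hq)
  have hFq := le_mul_exp_mul_inv_sq_of_sq_mul_mul_exp_neg_le
    (show 0 < A + q by linarith [hq.1]).ne' (hF q hq)
  have hGq := le_mul_exp_mul_inv_sq_of_sq_mul_mul_exp_neg_le
    (show 0 < A + (t - q) by linarith [hq'.1]).ne' (hG (t - q) hq')
  calc ‖F q * G (t - q)‖ ≤ ‖F q‖ * ‖G (t - q)‖ := norm_mul_le _ _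
    _ ≤ MF * exp (ν * q) * ((A + q) ^ 2)⁻¹ * (MG * exp (ν * (t - q)) * ((A + (t - q)) ^ 2)⁻¹) :=
        mul_le_mul hFq hGq (norm_nonneg _) ((norm_nonneg _).trans hFq)
    _ = MF * MG * exp (ν * t) * (((A + q) ^ 2)⁻¹ * ((A + (t - q)) ^ 2)⁻¹) := by
        rw [show ν * t = ν * q + ν * (t - q) by ring, exp_add]
        ring
    _ ≤ MF * MG * exp (ν * t)
          * (2 / (A + t) ^ 2 * (((A + q) ^ 2)⁻¹ + ((A + (t - q)) ^ 2)⁻¹)) :=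
        mul_le_mul_of_nonneg_left (inv_sq_add_mul_inv_sq_add_sub_le hA hq) (by positivity)
    _ = _ := by ring

theorem sq_add_mul_norm_integral_mul_sub_mul_exp_neg_le [NormedSpace ℝ E] (hA : 0 < A)
    (ht : 0 ≤ t)
    (hF : ∀ q ∈ Icc 0 t, (A + q) ^ 2 * ‖F q‖ * exp (-ν * q) ≤ MF)
    (hG : ∀ q ∈ Icc 0 t, (A + q) ^ 2 * ‖G q‖ * exp (-ν * q) ≤ MG) :
    (A + t) ^ 2 * ‖∫ q in (0:ℝ)..t, F q * G (t - q)‖ * exp (-ν * t) ≤ 4 / A * MF * MG := by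
  have hMF : 0 ≤ MF := le_trans (by positivity) (hF 0 ⟨le_rfl, ht⟩)
  have hMG : 0 ≤ MG := le_trans (by positivity) (hG 0 ⟨le_rfl, ht⟩)
  set c := 2 * MF * MG * exp (ν * t) / (A + t) ^ 2 with hc
  have hint : ‖∫ q in (0:ℝ)..t, F q * G (t - q)‖ ≤ c * (2 * A⁻¹) := calc
    _ ≤ ∫ q in (0:ℝ)..t, c * (((A + q) ^ 2)⁻¹ + ((A + (t - q)) ^ 2)⁻¹) :=
        intervalIntegral.norm_integral_le_of_norm_le ht
          (ae_of_all _ fun q hq => norm_mul_apply_sub_le hA hF hG (Ioc_subset_Icc_self hq))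
          (((intervalIntegrable_inv_sq_add hA ht).add
            (intervalIntegrable_inv_sq_add_sub hA ht)).const_mul c)
    _ = c * (2 * (A⁻¹ - (A + t)⁻¹)) := by
        rw [intervalIntegral.integral_const_mul, integral_inv_sq_add_add_inv_sq_add_sub hA ht]
    _ ≤ c * (2 * A⁻¹) := by
        gcongr
        exact sub_le_self _ (by positivity)
  calc (A + t) ^ 2 * ‖∫ q in (0:ℝ)..t, F q * G (t - q)‖ * exp (-ν * t)
      ≤ (A + t) ^ 2 * (c * (2 * A⁻¹)) * exp (-ν * t) := by gcongr
    _ = 4 / A * MF * MG * (exp (ν * t) * exp (-ν * t)) := by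
        have : A + t ≠ 0 := by positivity
        rw [hc]
        field_simp
        ring
    _ = 4 / A * MF * MG := by rw [← exp_add, neg_mul, add_neg_cancel, exp_zero, mul_one]

end WeightedConvolution

/-- Convolution estimate in the weighted norm `‖F‖ = sup (A+|t|)^2 |F(t)| e^{-ν|t|}`
(restricted to Ω = [0,∞)): `‖F*G‖ ≤ (C/A)‖F‖‖G‖` for a universal constant `C`. -/
theorem convolution_weighted_norm_bound :
    ∃ C : ℝ, 0 < C ∧
      ∀ (A ν MF MG : ℝ) (F G : ℝ → ℂ), 0 < A → 0 < ν →
        Continuous F → Continuous G →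
        (∀ t : ℝ, 0 ≤ t → (A + |t|) ^ 2 * ‖F t‖ * Real.exp (-ν * |t|) ≤ MF) →
        (∀ t : ℝ, 0 ≤ t → (A + |t|) ^ 2 * ‖G t‖ * Real.exp (-ν * |t|) ≤ MG) →
        ∀ t : ℝ, 0 ≤ t →
          (A + |t|) ^ 2 * ‖∫ q in (0:ℝ)..t, F q * G (t - q)‖ * Real.exp (-ν * |t|)
            ≤ C / A * MF * MG := by
  refine ⟨4, by norm_num, fun A ν MF MG F G hA _ _ _ hF hG t ht => ?_⟩
  have weighted_bound (H : ℝ → ℂ) (M : ℝ)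
      (hH : ∀ q, 0 ≤ q → (A + |q|) ^ 2 * ‖H q‖ * exp (-ν * |q|) ≤ M) :
      ∀ q ∈ Icc 0 t, (A + q) ^ 2 * ‖H q‖ * exp (-ν * q) ≤ M := fun q hq => by
    simpa only [abs_of_nonneg hq.1] using hH q hq.1
  rw [abs_of_nonneg ht]
  exact sq_add_mul_norm_integral_mul_sub_mul_exp_neg_le hA ht
    (weighted_bound F MF hF) (weighted_bound G MG hG)
end

section
/- Let X be the Banach space of continuous functions F : [0,∞)² → ℂ with finite norm ‖F‖_ν = sup_{(s,t)} |F(s,t)| e^{-ν t}. Let V : ℝ → ℂ be continuous with ∫_ℝ |V| < ∞. Define J(F)(s,t) = t - (1/4)∫₀ᵗ ∫_t^s V((s₁-t₁)/2) F(s₁,t₁) ds₁ dt₁. Then ‖J(F) - J(G)‖_ν ≤ (C/ν) ‖F-G‖_ν with C depending only on ∫|V|, so J is a contraction on X for ν large enough, and hence the integral equation Φ = J(Φ) has a unique solution Φ ∈ X. -/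
/-!
Multiplying by `e^{-νt}` and composing with the retraction of the plane onto the quadrant embeds
the continuous functions `F` on the quadrant with `‖F‖_ν < ∞` isometrically into the Banach space
`ℝ × ℝ →ᵇ ℂ`, and `J` induces a self-map of that space. Since `J` is affine, only the integral
of `V · (F - G)` has to be estimated: as `s₁ ↦ V((s₁ - t₁)/2)` has `L¹` norm `2∫|V|`, the inner
integral is at most `2∫|V| ‖F - G‖_ν e^{νt₁}`, and `∫₀ᵗ e^{νt₁} dt₁ ≤ e^{νt}/ν`. For `ν ≥ 2C`
the induced map is a contraction, so Banach's theorem gives the fixed point; uniqueness holds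
because the weighted distance `d` of two fixed points satisfies `d ≤ (C/ν) d`.
-/

open MeasureTheory Real Set

/-- The integral operator `J(F)(s,t) = t - (1/4)∫₀ᵗ∫_t^s V((s₁-t₁)/2) F(s₁,t₁) ds₁ dt₁`. -/
noncomputable def Jop (V : ℝ → ℂ) (F : ℝ × ℝ → ℂ) : ℝ × ℝ → ℂ :=
  fun p => (p.2 : ℂ) -
    (1 / 4 : ℂ) * ∫ t₁ in (0:ℝ)..p.2, ∫ s₁ in p.2..p.1, V ((s₁ - t₁) / 2) * F (s₁, t₁)

open BoundedContinuousFunction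

theorem continuous_parametric_intervalIntegral_of_continuous_bounds {X E : Type*}
    [TopologicalSpace X] [NormedAddCommGroup E] [NormedSpace ℝ E] {f : X → ℝ → E}
    (hf : Continuous f.uncurry) {a b : X → ℝ} (ha : Continuous a) (hb : Continuous b) :
    Continuous fun x => ∫ t in a x..b x, f x t := by
  have hfx (x : X) : Continuous (f x) := hf.comp₂ continuous_const continuous_id
  have hprim {c : X → ℝ} (hc : Continuous c) : Continuous fun x => ∫ t in (0 : ℝ)..c x, f x t :=
    intervalIntegral.continuous_parametric_intervalIntegral_of_continuous (μ := volume) hf hc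
  refine ((hprim hb).sub (hprim ha)).congr fun x => ?_
  exact intervalIntegral.integral_interval_sub_left ((hfx x).intervalIntegrable 0 (b x))
    ((hfx x).intervalIntegrable 0 (a x))

lemma abs_intervalIntegral_norm_comp_sub_div_two_le {E : Type*} [NormedAddCommGroup E]
    {V : ℝ → E} (hVi : Integrable V) (a b c : ℝ) :
    |∫ x in a..b, ‖V ((x - c) / 2)‖| ≤ 2 * ∫ x, ‖V x‖ := by
  have hW : Integrable fun x => ‖V ((x - c) / 2)‖ :=
    (hVi.norm.comp_div two_ne_zero).comp_sub_right c
  rw [intervalIntegral.abs_intervalIntegral_eq,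
    abs_of_nonneg (setIntegral_nonneg measurableSet_uIoc fun x _ => norm_nonneg _)]
  calc ∫ x in uIoc a b, ‖V ((x - c) / 2)‖ ≤ ∫ x, ‖V ((x - c) / 2)‖ :=
        setIntegral_le_integral hW (.of_forall fun x => norm_nonneg _)
    _ = ∫ y, ‖V (y / 2)‖ := integral_sub_right_eq_self (fun y => ‖V (y / 2)‖) c
    _ = 2 * ∫ x, ‖V x‖ := by
        rw [Measure.integral_comp_div (fun y => ‖V y‖) 2, abs_two, smul_eq_mul]

lemma integral_exp_mul_le {ν : ℝ} (hν : 0 < ν) (t : ℝ) :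
    ∫ x in (0 : ℝ)..t, exp (ν * x) ≤ exp (ν * t) / ν := by
  rw [intervalIntegral.integral_comp_mul_left (fun x => exp x) hν.ne', integral_exp,
    mul_zero, exp_zero, smul_eq_mul, inv_mul_eq_div]
  gcongr
  linarith

def quadrantRetraction (p : ℝ × ℝ) : ℝ × ℝ := (max p.1 0, max p.2 0)

lemma continuous_quadrantRetraction : Continuous quadrantRetraction := by
  unfold quadrantRetraction; fun_prop

lemma quadrantRetraction_mem (p : ℝ × ℝ) : quadrantRetraction p ∈ Ici (0 : ℝ) ×ˢ Ici (0 : ℝ) :=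
  show 0 ≤ max p.1 0 ∧ 0 ≤ max p.2 0 from ⟨le_max_right _ _, le_max_right _ _⟩

lemma quadrantRetraction_of_nonneg {s t : ℝ} (hs : 0 ≤ s) (ht : 0 ≤ t) :
    quadrantRetraction (s, t) = (s, t) := by
  simp [quadrantRetraction, hs, ht]

lemma ContinuousOn.continuous_comp_quadrantRetraction {F : ℝ × ℝ → ℂ}
    (hF : ContinuousOn F (Ici 0 ×ˢ Ici 0)) : Continuous (F ∘ quadrantRetraction) :=
  hF.comp_continuous continuous_quadrantRetraction quadrantRetraction_mem

section Weighted

variable (ν : ℝ)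

noncomputable def toBCFWeighted (F : ℝ × ℝ → ℂ) (hF : ContinuousOn F (Ici 0 ×ˢ Ici 0)) (M : ℝ)
    (hM : ∀ s t : ℝ, 0 ≤ s → 0 ≤ t → ‖F (s, t)‖ ≤ M * exp (ν * t)) : ℝ × ℝ →ᵇ ℂ :=
  .ofNormedAddCommGroup
    (fun p => F (quadrantRetraction p) * (exp (-(ν * (quadrantRetraction p).2)) : ℂ))
    (by
      refine (hF.continuous_comp_quadrantRetraction).mul ?_
      exact Complex.continuous_ofReal.comp <| by unfold quadrantRetraction; fun_prop)
    M
    (fun p => by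
      obtain ⟨hs, ht⟩ := quadrantRetraction_mem p
      rw [norm_mul, Complex.norm_real, norm_of_nonneg (exp_nonneg _), exp_neg,
        ← div_eq_mul_inv, div_le_iff₀ (exp_pos _)]
      exact hM _ _ hs ht)

lemma toBCFWeighted_apply (F : ℝ × ℝ → ℂ) (hF : ContinuousOn F (Ici 0 ×ˢ Ici 0)) (M : ℝ)
    (hM : ∀ s t : ℝ, 0 ≤ s → 0 ≤ t → ‖F (s, t)‖ ≤ M * exp (ν * t)) (p : ℝ × ℝ) :
    toBCFWeighted ν F hF M hM p =
      F (quadrantRetraction p) * (exp (-(ν * (quadrantRetraction p).2)) : ℂ) :=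
  rfl

noncomputable def ofBCFWeighted (g : ℝ × ℝ →ᵇ ℂ) (p : ℝ × ℝ) : ℂ := g p * (exp (ν * p.2) : ℂ)

variable {ν}

lemma continuous_ofBCFWeighted (g : ℝ × ℝ →ᵇ ℂ) : Continuous (ofBCFWeighted ν g) := by
  unfold ofBCFWeighted; fun_prop

lemma norm_ofBCFWeighted_sub_le (g h : ℝ × ℝ →ᵇ ℂ) (p : ℝ × ℝ) :
    ‖ofBCFWeighted ν g p - ofBCFWeighted ν h p‖ ≤ dist g h * exp (ν * p.2) := by
  rw [ofBCFWeighted, ofBCFWeighted, ← sub_mul, norm_mul, Complex.norm_real,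
    norm_of_nonneg (exp_nonneg _), ← dist_eq_norm]
  gcongr
  exact dist_coe_le_dist p

lemma norm_ofBCFWeighted_le (g : ℝ × ℝ →ᵇ ℂ) (p : ℝ × ℝ) :
    ‖ofBCFWeighted ν g p‖ ≤ ‖g‖ * exp (ν * p.2) := by
  simpa [ofBCFWeighted] using norm_ofBCFWeighted_sub_le (ν := ν) g 0 p

lemma ofBCFWeighted_toBCFWeighted {F : ℝ × ℝ → ℂ} (hF : ContinuousOn F (Ici 0 ×ˢ Ici 0)) {M : ℝ}
    (hM : ∀ s t : ℝ, 0 ≤ s → 0 ≤ t → ‖F (s, t)‖ ≤ M * exp (ν * t)) {s t : ℝ}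
    (hs : 0 ≤ s) (ht : 0 ≤ t) :
    ofBCFWeighted ν (toBCFWeighted ν F hF M hM) (s, t) = F (s, t) := by
  rw [ofBCFWeighted, toBCFWeighted_apply, quadrantRetraction_of_nonneg hs ht, mul_assoc,
    ← Complex.ofReal_mul, ← exp_add, neg_add_cancel, exp_zero, Complex.ofReal_one, mul_one]

lemma dist_toBCFWeighted_le {F G : ℝ × ℝ → ℂ} {hF : ContinuousOn F (Ici 0 ×ˢ Ici 0)}
    {hG : ContinuousOn G (Ici 0 ×ˢ Ici 0)} {MF MG : ℝ}
    {hMF : ∀ s t : ℝ, 0 ≤ s → 0 ≤ t → ‖F (s, t)‖ ≤ MF * exp (ν * t)}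
    {hMG : ∀ s t : ℝ, 0 ≤ s → 0 ≤ t → ‖G (s, t)‖ ≤ MG * exp (ν * t)} {N : ℝ}
    (h : ∀ s t : ℝ, 0 ≤ s → 0 ≤ t → ‖F (s, t) - G (s, t)‖ ≤ N * exp (ν * t)) :
    dist (toBCFWeighted ν F hF MF hMF) (toBCFWeighted ν G hG MG hMG) ≤ N := by
  have hN : 0 ≤ N := by simpa using (norm_nonneg _).trans (h 0 0 le_rfl le_rfl)
  refine (dist_le hN).2 fun p => ?_
  obtain ⟨hs, ht⟩ := quadrantRetraction_mem p
  rw [dist_eq_norm, toBCFWeighted_apply, toBCFWeighted_apply, ← sub_mul, norm_mul,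
    Complex.norm_real, norm_of_nonneg (exp_nonneg _), exp_neg, ← div_eq_mul_inv, div_le_iff₀ (exp_pos _)]
  exact h _ _ hs ht

lemma norm_sub_le_dist_toBCFWeighted {F G : ℝ × ℝ → ℂ} (hF : ContinuousOn F (Ici 0 ×ˢ Ici 0))
    (hG : ContinuousOn G (Ici 0 ×ˢ Ici 0)) {MF MG : ℝ}
    (hMF : ∀ s t : ℝ, 0 ≤ s → 0 ≤ t → ‖F (s, t)‖ ≤ MF * exp (ν * t))
    (hMG : ∀ s t : ℝ, 0 ≤ s → 0 ≤ t → ‖G (s, t)‖ ≤ MG * exp (ν * t)) {s t : ℝ}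
    (hs : 0 ≤ s) (ht : 0 ≤ t) :
    ‖F (s, t) - G (s, t)‖ ≤
      dist (toBCFWeighted ν F hF MF hMF) (toBCFWeighted ν G hG MG hMG) * exp (ν * t) := by
  simpa only [ofBCFWeighted_toBCFWeighted _ _ hs ht] using norm_ofBCFWeighted_sub_le (ν := ν)
    (toBCFWeighted ν F hF MF hMF) (toBCFWeighted ν G hG MG hMG) (s, t)

end Weighted

def WeightedLipschitzWith (ν q : ℝ) (J : (ℝ × ℝ → ℂ) → ℝ × ℝ → ℂ) : Prop :=
  ∀ (F G : ℝ × ℝ → ℂ) (M : ℝ),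
    ContinuousOn F (Ici 0 ×ˢ Ici 0) → ContinuousOn G (Ici 0 ×ˢ Ici 0) →
    (∀ s t : ℝ, 0 ≤ s → 0 ≤ t → ‖F (s, t) - G (s, t)‖ ≤ M * exp (ν * t)) →
    ∀ s t : ℝ, 0 ≤ s → 0 ≤ t → ‖J F (s, t) - J G (s, t)‖ ≤ q * M * exp (ν * t)

section FixedPoint

variable {ν q : ℝ} {J : (ℝ × ℝ → ℂ) → ℝ × ℝ → ℂ}

theorem WeightedLipschitzWith.exists_fixedPoint (hJ : WeightedLipschitzWith ν q J) (hq : q < 1)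
    (hJc : ∀ F, ContinuousOn F (Ici 0 ×ˢ Ici 0) → ContinuousOn (J F) (Ici 0 ×ˢ Ici 0))
    (hJ0 : ∃ M : ℝ, ∀ s t : ℝ, 0 ≤ s → 0 ≤ t → ‖J 0 (s, t)‖ ≤ M * exp (ν * t)) :
    ∃ Φ : ℝ × ℝ → ℂ, ContinuousOn Φ (Ici 0 ×ˢ Ici 0) ∧
      (∃ M : ℝ, ∀ s t : ℝ, 0 ≤ s → 0 ≤ t → ‖Φ (s, t)‖ ≤ M * exp (ν * t)) ∧
      ∀ s t : ℝ, 0 ≤ s → 0 ≤ t → Φ (s, t) = J Φ (s, t) := by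
  obtain ⟨M₀, hM₀⟩ := hJ0
  have hgc (g : ℝ × ℝ →ᵇ ℂ) : ContinuousOn (ofBCFWeighted ν g) (Ici 0 ×ˢ Ici 0) :=
    (continuous_ofBCFWeighted g).continuousOn
  have hbound (g : ℝ × ℝ →ᵇ ℂ) (s t : ℝ) (hs : 0 ≤ s) (ht : 0 ≤ t) :
      ‖J (ofBCFWeighted ν g) (s, t)‖ ≤ (q * ‖g‖ + M₀) * exp (ν * t) := by
    have hdiff := hJ _ 0 ‖g‖ (hgc g) continuousOn_const
      (fun s t _ _ => by simpa using norm_ofBCFWeighted_le g (s, t)) s t hs ht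
    calc ‖J (ofBCFWeighted ν g) (s, t)‖
        ≤ ‖J (ofBCFWeighted ν g) (s, t) - J 0 (s, t)‖ + ‖J 0 (s, t)‖ := norm_le_norm_sub_add _ _
      _ ≤ q * ‖g‖ * exp (ν * t) + M₀ * exp (ν * t) := add_le_add hdiff (hM₀ s t hs ht)
      _ = (q * ‖g‖ + M₀) * exp (ν * t) := by ring
  let T (g : ℝ × ℝ →ᵇ ℂ) : ℝ × ℝ →ᵇ ℂ :=
    toBCFWeighted ν (J (ofBCFWeighted ν g)) (hJc _ (hgc g)) _ (hbound g)
  have hT : ContractingWith q.toNNReal T := by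
    refine ⟨Real.toNNReal_lt_one.2 hq, LipschitzWith.of_dist_le_mul fun g h => ?_⟩
    calc dist (T g) (T h) ≤ q * dist g h :=
          dist_toBCFWeighted_le (hJ _ _ _ (hgc g) (hgc h)
            fun s t _ _ => norm_ofBCFWeighted_sub_le g h (s, t))
      _ ≤ q.toNNReal * dist g h := by gcongr; exact Real.le_coe_toNNReal q
  set g := hT.fixedPoint T
  refine ⟨ofBCFWeighted ν g, hgc g, ⟨‖g‖, fun s t _ _ => norm_ofBCFWeighted_le g (s, t)⟩,
    fun s t hs ht => ?_⟩
  calc ofBCFWeighted ν g (s, t) = ofBCFWeighted ν (T g) (s, t) := by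
        rw [hT.fixedPoint_isFixedPt]
    _ = J (ofBCFWeighted ν g) (s, t) := ofBCFWeighted_toBCFWeighted _ _ hs ht

theorem WeightedLipschitzWith.eqOn_of_fixedPoint (hJ : WeightedLipschitzWith ν q J) (hq : q < 1)
    {Φ Ψ : ℝ × ℝ → ℂ} (hΦc : ContinuousOn Φ (Ici 0 ×ˢ Ici 0))
    (hΦb : ∃ M : ℝ, ∀ s t : ℝ, 0 ≤ s → 0 ≤ t → ‖Φ (s, t)‖ ≤ M * exp (ν * t))
    (hΦ : ∀ s t : ℝ, 0 ≤ s → 0 ≤ t → Φ (s, t) = J Φ (s, t))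
    (hΨc : ContinuousOn Ψ (Ici 0 ×ˢ Ici 0))
    (hΨb : ∃ M : ℝ, ∀ s t : ℝ, 0 ≤ s → 0 ≤ t → ‖Ψ (s, t)‖ ≤ M * exp (ν * t))
    (hΨ : ∀ s t : ℝ, 0 ≤ s → 0 ≤ t → Ψ (s, t) = J Ψ (s, t)) :
    ∀ s t : ℝ, 0 ≤ s → 0 ≤ t → Ψ (s, t) = Φ (s, t) := by
  obtain ⟨MΦ, hMΦ⟩ := hΦb
  obtain ⟨MΨ, hMΨ⟩ := hΨb
  set d := dist (toBCFWeighted ν Ψ hΨc MΨ hMΨ) (toBCFWeighted ν Φ hΦc MΦ hMΦ)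
  have hd : d ≤ q * d := dist_toBCFWeighted_le fun s t hs ht => by
    rw [hΨ s t hs ht, hΦ s t hs ht]
    exact hJ Ψ Φ d hΨc hΦc (fun s t hs ht => norm_sub_le_dist_toBCFWeighted _ _ _ _ hs ht)
      s t hs ht
  have hd0 : d = 0 := by nlinarith [show 0 ≤ d from dist_nonneg]
  intro s t hs ht
  rw [← ofBCFWeighted_toBCFWeighted hΨc hMΨ hs ht, ← ofBCFWeighted_toBCFWeighted hΦc hMΦ hs ht,
    dist_eq_zero.1 hd0]

end FixedPoint

section Jop

variable {V : ℝ → ℂ}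

lemma Jop_zero (p : ℝ × ℝ) : Jop V 0 p = p.2 := by
  simp [Jop]

lemma norm_Jop_zero_le {ν : ℝ} (hν : 0 < ν) {s t : ℝ} (ht : 0 ≤ t) :
    ‖Jop V 0 (s, t)‖ ≤ 1 / ν * exp (ν * t) := by
  rw [Jop_zero, Complex.norm_real, norm_of_nonneg ht, one_div_mul_eq_div, le_div_iff₀ hν]
  linarith [add_one_le_exp (ν * t)]

lemma Jop_congr {F G : ℝ × ℝ → ℂ} (h : ∀ s t : ℝ, 0 ≤ s → 0 ≤ t → F (s, t) = G (s, t))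
    {s t : ℝ} (hs : 0 ≤ s) (ht : 0 ≤ t) : Jop V F (s, t) = Jop V G (s, t) := by
  simp only [Jop]
  congr 2
  refine intervalIntegral.integral_congr fun t₁ ht₁ => ?_
  refine intervalIntegral.integral_congr fun s₁ hs₁ => ?_
  have ht₁ : 0 ≤ t₁ := (le_min le_rfl ht).trans ht₁.1
  have hs₁ : 0 ≤ s₁ := (le_min ht hs).trans hs₁.1
  simp only [h s₁ t₁ hs₁ ht₁]

lemma continuous_Jop (hVc : Continuous V) {F : ℝ × ℝ → ℂ} (hF : Continuous F) :
    Continuous (Jop V F) := by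
  have hinner : Continuous fun q : (ℝ × ℝ) × ℝ =>
      ∫ s₁ in q.1.2..q.1.1, V ((s₁ - q.2) / 2) * F (s₁, q.2) :=
    continuous_parametric_intervalIntegral_of_continuous_bounds
      (f := fun (q : (ℝ × ℝ) × ℝ) (s₁ : ℝ) => V ((s₁ - q.2) / 2) * F (s₁, q.2))
      (by fun_prop) (by fun_prop) (by fun_prop)
  have houter := intervalIntegral.continuous_parametric_intervalIntegral_of_continuous
    (f := fun (p : ℝ × ℝ) (t₁ : ℝ) => ∫ s₁ in p.2..p.1, V ((s₁ - t₁) / 2) * F (s₁, t₁))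
    (a₀ := 0) (μ := volume) hinner continuous_snd
  unfold Jop
  fun_prop

lemma comp_quadrantRetraction_of_nonneg (F : ℝ × ℝ → ℂ) {s t : ℝ} (hs : 0 ≤ s) (ht : 0 ≤ t) :
    (F ∘ quadrantRetraction) (s, t) = F (s, t) := by
  rw [Function.comp_apply, quadrantRetraction_of_nonneg hs ht]

lemma continuousOn_Jop (hVc : Continuous V) {F : ℝ × ℝ → ℂ}
    (hF : ContinuousOn F (Ici 0 ×ˢ Ici 0)) : ContinuousOn (Jop V F) (Ici 0 ×ˢ Ici 0) := by
  refine (continuous_Jop hVc hF.continuous_comp_quadrantRetraction).continuousOn.congr ?_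
  rintro ⟨s, t⟩ ⟨hs, ht⟩
  exact Jop_congr (fun s t hs ht => (comp_quadrantRetraction_of_nonneg F hs ht).symm) hs ht

lemma Jop_sub_Jop (hVc : Continuous V) {F G : ℝ × ℝ → ℂ} (hF : Continuous F)
    (hG : Continuous G) (p : ℝ × ℝ) :
    Jop V F p - Jop V G p = -(1 / 4) *
      ∫ t₁ in (0 : ℝ)..p.2, ∫ s₁ in p.2..p.1, V ((s₁ - t₁) / 2) * (F (s₁, t₁) - G (s₁, t₁)) := by
  have hkernel {H : ℝ × ℝ → ℂ} (hH : Continuous H) :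
      Continuous (Function.uncurry fun t₁ s₁ : ℝ => V ((s₁ - t₁) / 2) * H (s₁, t₁)) := by
    fun_prop
  have hinner {H : ℝ × ℝ → ℂ} (hH : Continuous H) (t₁ : ℝ) :
      IntervalIntegrable (fun s₁ => V ((s₁ - t₁) / 2) * H (s₁, t₁)) volume p.2 p.1 :=
    ((hkernel hH).comp₂ continuous_const continuous_id).intervalIntegrable _ _
  have houter {H : ℝ × ℝ → ℂ} (hH : Continuous H) :
      IntervalIntegrable (fun t₁ => ∫ s₁ in p.2..p.1, V ((s₁ - t₁) / 2) * H (s₁, t₁))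
        volume 0 p.2 :=
    (intervalIntegral.continuous_parametric_intervalIntegral_of_continuous'
      (hkernel hH) p.2 p.1).intervalIntegrable _ _
  simp only [Jop, mul_sub, intervalIntegral.integral_sub (hinner hF _) (hinner hG _),
    intervalIntegral.integral_sub (houter hF) (houter hG)]
  ring

lemma norm_integral_integral_kernel_le (hVi : Integrable V) {H : ℝ × ℝ → ℂ} {ν M : ℝ}
    (hν : 0 < ν) (hH : ∀ s t : ℝ, 0 ≤ s → 0 ≤ t → ‖H (s, t)‖ ≤ M * exp (ν * t))
    {s t : ℝ} (hs : 0 ≤ s) (ht : 0 ≤ t) :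
    ‖∫ t₁ in (0 : ℝ)..t, ∫ s₁ in t..s, V ((s₁ - t₁) / 2) * H (s₁, t₁)‖ ≤
      2 * (∫ x, ‖V x‖) / ν * M * exp (ν * t) := by
  have hM : 0 ≤ M := by simpa using (norm_nonneg _).trans (hH 0 0 le_rfl le_rfl)
  have hinner (t₁ : ℝ) (ht₁ : t₁ ∈ Ioc 0 t) :
      ‖∫ s₁ in t..s, V ((s₁ - t₁) / 2) * H (s₁, t₁)‖ ≤
        2 * (∫ x, ‖V x‖) * M * exp (ν * t₁) := by
    have hVt : IntervalIntegrable (fun s₁ => ‖V ((s₁ - t₁) / 2)‖) volume t s :=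
      ((hVi.norm.comp_div two_ne_zero).comp_sub_right t₁).intervalIntegrable
    calc ‖∫ s₁ in t..s, V ((s₁ - t₁) / 2) * H (s₁, t₁)‖
        ≤ |∫ s₁ in t..s, ‖V ((s₁ - t₁) / 2)‖ * (M * exp (ν * t₁))| := by
          refine intervalIntegral.norm_integral_le_abs_of_norm_le
            ((ae_restrict_iff' measurableSet_uIoc).2 (.of_forall fun s₁ hs₁ => ?_))
            (hVt.mul_const _)
          rw [norm_mul]
          gcongr
          exact hH _ _ ((le_min ht hs).trans hs₁.1.le) ht₁.1.le
      _ = |∫ s₁ in t..s, ‖V ((s₁ - t₁) / 2)‖| * (M * exp (ν * t₁)) := by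
          rw [intervalIntegral.integral_mul_const, abs_mul,
            abs_of_nonneg (mul_nonneg hM (exp_nonneg _))]
      _ ≤ 2 * (∫ x, ‖V x‖) * (M * exp (ν * t₁)) := by
          gcongr
          exact abs_intervalIntegral_norm_comp_sub_div_two_le hVi t s t₁
      _ = 2 * (∫ x, ‖V x‖) * M * exp (ν * t₁) := by ring
  have hmajorant : Continuous fun t₁ => 2 * (∫ x, ‖V x‖) * M * exp (ν * t₁) := by fun_prop
  calc ‖∫ t₁ in (0 : ℝ)..t, ∫ s₁ in t..s, V ((s₁ - t₁) / 2) * H (s₁, t₁)‖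
      ≤ ∫ t₁ in (0 : ℝ)..t, 2 * (∫ x, ‖V x‖) * M * exp (ν * t₁) :=
        intervalIntegral.norm_integral_le_of_norm_le ht (.of_forall hinner)
          (hmajorant.intervalIntegrable _ _)
    _ ≤ 2 * (∫ x, ‖V x‖) * M * (exp (ν * t) / ν) := by
        rw [intervalIntegral.integral_const_mul]
        gcongr
        exact integral_exp_mul_le hν t
    _ = 2 * (∫ x, ‖V x‖) / ν * M * exp (ν * t) := by ring

theorem weightedLipschitzWith_Jop (hVc : Continuous V) (hVi : Integrable V) {C ν : ℝ}
    (hC : (∫ x, ‖V x‖) / 2 ≤ C) (hν : 0 < ν) : WeightedLipschitzWith ν (C / ν) (Jop V) := by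
  intro F G M hF hG hFG s t hs ht
  have hM : 0 ≤ M := by simpa using (norm_nonneg _).trans (hFG 0 0 le_rfl le_rfl)
  have hretract {H : ℝ × ℝ → ℂ} :=
    Jop_congr (V := V) (fun s t hs ht => (comp_quadrantRetraction_of_nonneg H hs ht).symm) hs ht
  rw [hretract, hretract (H := G), Jop_sub_Jop hVc hF.continuous_comp_quadrantRetraction
    hG.continuous_comp_quadrantRetraction, norm_mul]
  have hbound := norm_integral_integral_kernel_le hVi hν (H := fun p =>
      (F ∘ quadrantRetraction) p - (G ∘ quadrantRetraction) p)
    (fun s t hs ht => by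
      simpa only [comp_quadrantRetraction_of_nonneg _ hs ht] using hFG s t hs ht) hs ht
  calc ‖-(1 / 4 : ℂ)‖ * _ ≤ 1 / 4 * (2 * (∫ x, ‖V x‖) / ν * M * exp (ν * t)) := by
        rw [norm_neg, norm_div, norm_one, Complex.norm_ofNat]
        gcongr
    _ = (∫ x, ‖V x‖) / 2 / ν * M * exp (ν * t) := by ring
    _ ≤ C / ν * M * exp (ν * t) := by gcongr

end Jop

/-- `J` is a `C/ν`-Lipschitz (hence contractive for large `ν`) map in the weighted norm
`‖F‖_ν = sup |F(s,t)|e^{-νt}` on continuous exponentially bounded functions on the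
quadrant, and the equation `Φ = J(Φ)` has a unique such solution. -/
theorem Jop_contraction_and_fixed_point (V : ℝ → ℂ)
    (hVc : Continuous V) (hVi : Integrable V) :
    ∃ C : ℝ, 0 < C ∧
      (∀ ν : ℝ, 0 < ν → ∀ (F G : ℝ × ℝ → ℂ) (M : ℝ),
        ContinuousOn F (Ici 0 ×ˢ Ici 0) → ContinuousOn G (Ici 0 ×ˢ Ici 0) →
        (∀ s t : ℝ, 0 ≤ s → 0 ≤ t → ‖F (s, t) - G (s, t)‖ ≤ M * Real.exp (ν * t)) →
        ∀ s t : ℝ, 0 ≤ s → 0 ≤ t →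
          ‖Jop V F (s, t) - Jop V G (s, t)‖ ≤ C / ν * M * Real.exp (ν * t)) ∧
      (∃ ν₀ : ℝ, ∀ ν : ℝ, ν₀ ≤ ν →
        ∃ Φ : ℝ × ℝ → ℂ,
          ContinuousOn Φ (Ici 0 ×ˢ Ici 0) ∧
          (∃ M : ℝ, ∀ s t : ℝ, 0 ≤ s → 0 ≤ t → ‖Φ (s, t)‖ ≤ M * Real.exp (ν * t)) ∧
          (∀ s t : ℝ, 0 ≤ s → 0 ≤ t → Φ (s, t) = Jop V Φ (s, t)) ∧
          (∀ Φ' : ℝ × ℝ → ℂ,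
            ContinuousOn Φ' (Ici 0 ×ˢ Ici 0) →
            (∃ M : ℝ, ∀ s t : ℝ, 0 ≤ s → 0 ≤ t → ‖Φ' (s, t)‖ ≤ M * Real.exp (ν * t)) →
            (∀ s t : ℝ, 0 ≤ s → 0 ≤ t → Φ' (s, t) = Jop V Φ' (s, t)) →
            ∀ s t : ℝ, 0 ≤ s → 0 ≤ t → Φ' (s, t) = Φ (s, t))) := by
  set C := (∫ x, ‖V x‖) / 2 + 1
  have hC : 0 < C := by positivity
  have hJ (ν : ℝ) (hν : 0 < ν) : WeightedLipschitzWith ν (C / ν) (Jop V) :=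
    weightedLipschitzWith_Jop hVc hVi (le_add_of_nonneg_right zero_le_one) hν
  refine ⟨C, hC, hJ, 2 * C, fun ν hν => ?_⟩
  have hν0 : 0 < ν := by linarith
  have hq : C / ν < 1 := (div_lt_one hν0).2 (by linarith)
  obtain ⟨Φ, hΦc, hΦb, hΦ⟩ := (hJ ν hν0).exists_fixedPoint hq
    (fun F hF => continuousOn_Jop hVc hF) ⟨1 / ν, fun s t _ ht => norm_Jop_zero_le hν0 ht⟩
  exact ⟨Φ, hΦc, hΦb, hΦ, fun Ψ hΨc hΨb hΨ =>
    (hJ ν hν0).eqOn_of_fixedPoint hq hΦc hΦb hΦ hΨc hΨb hΨ⟩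
end
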